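/- arXiv:2506.12904 — 2 statements merged into one kernel-verified Lean document; each statement's English description precedes it below -/
import Mathlib

section
/- The union over all bricks M of ℒ of the walls D(M) is equal to the union over all bricks M of ℒ of the interiors int D(M); that is, every point lying on some wall D(M) lies in the interior int D(M') of some (possibly different) wall. -/
set_option autoImplicit false
set_option maxHeartbeats 1000000

open scoped BigOperators

noncomputable section

/-- The pairing `θ(M)` of a stability condition `θ ∈ ℝⁿ` with a dimension vector `d ∈ ℕⁿ`:
the dot product. -/
def pr {n : ℕ} (θ : Fin n → ℝ) (d : Fin n → ℕ) : ℝ := ∑ k, θ k * (d k : ℝ)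

/-- `M` lies in `add Bk`, the additive closure of the family of modules `Bk`, i.e. `M` is
isomorphic to a finite direct sum of members of the family. -/
def InAdd (Λ : Type) [Ring Λ] {ι : Type} (Bk : ι → Type)
    [∀ i, AddCommGroup (Bk i)] [∀ i, Module Λ (Bk i)]
    (M : Type) [AddCommGroup M] [Module Λ M] : Prop :=
  ∃ (k : ℕ) (f : Fin k → ι), Nonempty (M ≃ₗ[Λ] ((j : Fin k) → Bk (f j)))

/-- `M` is a brick: it is nonzero and every nonzero endomorphism is invertible. -/
def IsBrick (Λ : Type) [Ring Λ] (M : Type) [AddCommGroup M] [Module Λ M] : Prop :=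
  Nontrivial M ∧ ∀ f : M →ₗ[Λ] M, f ≠ 0 → Function.Bijective f

/-- `M` is rigid: every self-extension of `M` splits. -/
def Rigid (Λ : Type) [Ring Λ] (M : Type) [AddCommGroup M] [Module Λ M] : Prop :=
  ∀ (E : Type) [AddCommGroup E] [Module Λ E] (f : M →ₗ[Λ] E) (g : E →ₗ[Λ] M),
    Function.Injective f → Function.Surjective g → LinearMap.range f = LinearMap.ker g →
    ∃ h : M →ₗ[Λ] E, g.comp h = LinearMap.id

/-- `M` is an indecomposable module. -/
def Indecomp (Λ : Type) [Ring Λ] (M : Type) [AddCommGroup M] [Module Λ M] : Prop :=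
  Nontrivial M ∧ ∀ (A B : Type) [AddCommGroup A] [Module Λ A] [AddCommGroup B] [Module Λ B],
    Nontrivial A → Nontrivial B → IsEmpty (M ≃ₗ[Λ] (A × B))

/-- `M` has a finite filtration by submodules whose subquotients satisfy `P`
(e.g. `P = InAdd Λ Bk` gives membership in `Filt ℒ`). -/
def HasFiltBy (Λ : Type) [Ring Λ]
    (P : (M : Type) → [AddCommGroup M] → [Module Λ M] → Prop)
    (M : Type) [AddCommGroup M] [Module Λ M] : Prop :=
  ∃ (k : ℕ) (s : Fin (k+1) → Submodule Λ M), Monotone s ∧ s 0 = ⊥ ∧ s (Fin.last k) = ⊤ ∧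
    ∀ i : Fin k, P (↥(s i.succ) ⧸ Submodule.comap (s i.succ).subtype (s i.castSucc))

/-- `N` is a (proper, nonzero) weakly admissible quotient of `M`: there is a surjection
`M ↠ N` which is not injective, with `N ∈ ℒ = add Bk` and kernel in `Filt ℒ`. -/
def IsWAQuot (Λ : Type) [Ring Λ] {ι : Type} (Bk : ι → Type)
    [∀ i, AddCommGroup (Bk i)] [∀ i, Module Λ (Bk i)]
    (M : Type) [AddCommGroup M] [Module Λ M] (N : Type) [AddCommGroup N] [Module Λ N] : Prop :=
  Nontrivial N ∧ InAdd Λ Bk N ∧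
    ∃ g : M →ₗ[Λ] N, Function.Surjective g ∧ ¬ Function.Injective g ∧
      HasFiltBy Λ (InAdd Λ Bk) ↥(LinearMap.ker g)

/-- `N` is a (proper, nonzero) admissible quotient of `M`: there is a surjection
`M ↠ N` which is not injective, with `N ∈ ℒ = add Bk` and kernel in `ℒ`. -/
def IsAdmQuot (Λ : Type) [Ring Λ] {ι : Type} (Bk : ι → Type)
    [∀ i, AddCommGroup (Bk i)] [∀ i, Module Λ (Bk i)]
    (M : Type) [AddCommGroup M] [Module Λ M] (N : Type) [AddCommGroup N] [Module Λ N] : Prop :=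
  Nontrivial N ∧ InAdd Λ Bk N ∧
    ∃ g : M →ₗ[Λ] N, Function.Surjective g ∧ ¬ Function.Injective g ∧
      InAdd Λ Bk ↥(LinearMap.ker g)

/-- A weakly admissible morphism: image and cokernel lie in `ℒ = add Bk`, kernel in `Filt ℒ`. -/
def IsWAHom (Λ : Type) [Ring Λ] {ι : Type} (Bk : ι → Type)
    [∀ i, AddCommGroup (Bk i)] [∀ i, Module Λ (Bk i)]
    {X Y : Type} [AddCommGroup X] [Module Λ X] [AddCommGroup Y] [Module Λ Y]
    (f : X →ₗ[Λ] Y) : Prop :=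
  InAdd Λ Bk ↥(LinearMap.range f) ∧ InAdd Λ Bk (Y ⧸ LinearMap.range f) ∧
    HasFiltBy Λ (InAdd Λ Bk) ↥(LinearMap.ker f)

/-- An admissible morphism: kernel, image and cokernel all lie in `ℒ = add Bk`. -/
def IsAdmHom (Λ : Type) [Ring Λ] {ι : Type} (Bk : ι → Type)
    [∀ i, AddCommGroup (Bk i)] [∀ i, Module Λ (Bk i)]
    {X Y : Type} [AddCommGroup X] [Module Λ X] [AddCommGroup Y] [Module Λ Y]
    (f : X →ₗ[Λ] Y) : Prop :=
  InAdd Λ Bk ↥(LinearMap.ker f) ∧ InAdd Λ Bk ↥(LinearMap.range f) ∧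
    InAdd Λ Bk (Y ⧸ LinearMap.range f)

/-- The wall `D(M)`: all `θ` with `θ(M) = 0` and `θ(M') ≥ 0` for every weakly admissible
quotient `M'` of `M`. -/
def Wall (Λ : Type) [Ring Λ] {ι : Type} (Bk : ι → Type)
    [∀ i, AddCommGroup (Bk i)] [∀ i, Module Λ (Bk i)] {n : ℕ}
    (dimv : (M : Type) → [AddCommGroup M] → [Module Λ M] → Fin n → ℕ)
    (M : Type) [AddCommGroup M] [Module Λ M] : Set (Fin n → ℝ) :=
  {θ | pr θ (dimv M) = 0 ∧
    ∀ (N : Type) [AddCommGroup N] [Module Λ N], IsWAQuot Λ Bk M N → 0 ≤ pr θ (dimv N)}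

/-- The interior `int D(M)` of the wall `D(M)`: `θ(M) = 0` and `θ(M') > 0` for every weakly
admissible quotient `M'` of `M`. -/
def IntWall (Λ : Type) [Ring Λ] {ι : Type} (Bk : ι → Type)
    [∀ i, AddCommGroup (Bk i)] [∀ i, Module Λ (Bk i)] {n : ℕ}
    (dimv : (M : Type) → [AddCommGroup M] → [Module Λ M] → Fin n → ℕ)
    (M : Type) [AddCommGroup M] [Module Λ M] : Set (Fin n → ℝ) :=
  {θ | pr θ (dimv M) = 0 ∧
    ∀ (N : Type) [AddCommGroup N] [Module Λ N], IsWAQuot Λ Bk M N → 0 < pr θ (dimv N)}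

/-- The wall `D(M)`, in the extension-closed setting: defined using admissible quotients. -/
def WallAdm (Λ : Type) [Ring Λ] {ι : Type} (Bk : ι → Type)
    [∀ i, AddCommGroup (Bk i)] [∀ i, Module Λ (Bk i)] {n : ℕ}
    (dimv : (M : Type) → [AddCommGroup M] → [Module Λ M] → Fin n → ℕ)
    (M : Type) [AddCommGroup M] [Module Λ M] : Set (Fin n → ℝ) :=
  {θ | pr θ (dimv M) = 0 ∧
    ∀ (N : Type) [AddCommGroup N] [Module Λ N], IsAdmQuot Λ Bk M N → 0 ≤ pr θ (dimv N)}

/-- The interior of `D(M)`, in the extension-closed setting. -/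
def IntWallAdm (Λ : Type) [Ring Λ] {ι : Type} (Bk : ι → Type)
    [∀ i, AddCommGroup (Bk i)] [∀ i, Module Λ (Bk i)] {n : ℕ}
    (dimv : (M : Type) → [AddCommGroup M] → [Module Λ M] → Fin n → ℕ)
    (M : Type) [AddCommGroup M] [Module Λ M] : Set (Fin n → ℝ) :=
  {θ | pr θ (dimv M) = 0 ∧
    ∀ (N : Type) [AddCommGroup N] [Module Λ N], IsAdmQuot Λ Bk M N → 0 < pr θ (dimv N)}

/-- `M ∈ S(θ)`: `M` is zero, or `M ∈ ℒ`, `θ(M) > 0` and `θ(M') > 0` for every weakly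
admissible quotient `M'` of `M`. -/
def memS (Λ : Type) [Ring Λ] {ι : Type} (Bk : ι → Type)
    [∀ i, AddCommGroup (Bk i)] [∀ i, Module Λ (Bk i)] {n : ℕ}
    (dimv : (M : Type) → [AddCommGroup M] → [Module Λ M] → Fin n → ℕ)
    (θ : Fin n → ℝ) (M : Type) [AddCommGroup M] [Module Λ M] : Prop :=
  Subsingleton M ∨ (InAdd Λ Bk M ∧ 0 < pr θ (dimv M) ∧
    ∀ (N : Type) [AddCommGroup N] [Module Λ N], IsWAQuot Λ Bk M N → 0 < pr θ (dimv N))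

/-- `M ∈ S(θ)`, in the extension-closed setting: defined using admissible quotients. -/
def memSAdm (Λ : Type) [Ring Λ] {ι : Type} (Bk : ι → Type)
    [∀ i, AddCommGroup (Bk i)] [∀ i, Module Λ (Bk i)] {n : ℕ}
    (dimv : (M : Type) → [AddCommGroup M] → [Module Λ M] → Fin n → ℕ)
    (θ : Fin n → ℝ) (M : Type) [AddCommGroup M] [Module Λ M] : Prop :=
  Subsingleton M ∨ (InAdd Λ Bk M ∧ 0 < pr θ (dimv M) ∧
    ∀ (N : Type) [AddCommGroup N] [Module Λ N], IsAdmQuot Λ Bk M N → 0 < pr θ (dimv N))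

/-- `U` is a chamber: a connected component of the complement of the union of the walls
`D(Bk i)` over the bricks of `ℒ`. -/
def IsChamber (Λ : Type) [Ring Λ] {ι : Type} (Bk : ι → Type)
    [∀ i, AddCommGroup (Bk i)] [∀ i, Module Λ (Bk i)] {n : ℕ}
    (dimv : (M : Type) → [AddCommGroup M] → [Module Λ M] → Fin n → ℕ)
    (U : Set (Fin n → ℝ)) : Prop :=
  ∃ θ ∈ (⋃ i, Wall Λ Bk dimv (Bk i))ᶜ,
    U = connectedComponentIn ((⋃ i, Wall Λ Bk dimv (Bk i))ᶜ) θ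

/-- `U` is a chamber, in the extension-closed setting. -/
def IsChamberAdm (Λ : Type) [Ring Λ] {ι : Type} (Bk : ι → Type)
    [∀ i, AddCommGroup (Bk i)] [∀ i, Module Λ (Bk i)] {n : ℕ}
    (dimv : (M : Type) → [AddCommGroup M] → [Module Λ M] → Fin n → ℕ)
    (U : Set (Fin n → ℝ)) : Prop :=
  ∃ θ ∈ (⋃ i, WallAdm Λ Bk dimv (Bk i))ᶜ,
    U = connectedComponentIn ((⋃ i, WallAdm Λ Bk dimv (Bk i))ᶜ) θ

/-- A maximal green path, relative to walls `W i` with interiors `Wi i` and pairing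
functions `pv i θ = θ(Mᵢ)`: a generic smooth path crossing the walls `W (w 1), …, W (w m)`
in their interiors, at the increasing times `t 1 < ⋯ < t m`, each in the positive direction;
it starts in the chamber containing a point with all coordinates negative and ends in the
chamber containing a point with all coordinates positive. The associated maximal green
sequence is `Bk (w 1), …, Bk (w m)`. -/
structure IsMGP {ι : Type} {n : ℕ} (W Wi : ι → Set (Fin n → ℝ)) (pv : ι → (Fin n → ℝ) → ℝ)
    (γ : ℝ → Fin n → ℝ) (m : ℕ) (t : Fin m → ℝ) (w : Fin m → ι) : Prop where
  smooth : ContDiff ℝ (⊤ : ℕ∞) γ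
  mono : StrictMono t
  cross_interior : ∀ j, γ (t j) ∈ Wi (w j)
  cross_only : ∀ s : ℝ, γ s ∈ (⋃ i, W i) → ∃ j, s = t j
  cross_pos : ∀ j, 0 < deriv (fun s => pv (w j) (γ s)) (t j)
  start_neg : ∃ s : ℝ, (∀ j, s < t j) ∧ ∃ p : Fin n → ℝ, (∀ k, p k < 0) ∧
    p ∈ connectedComponentIn ((⋃ i, W i)ᶜ) (γ s)
  end_pos : ∃ s : ℝ, (∀ j, t j < s) ∧ ∃ p : Fin n → ℝ, (∀ k, 0 < p k) ∧
    p ∈ connectedComponentIn ((⋃ i, W i)ᶜ) (γ s)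

/-- A generic smooth green path, relative to the pairing functions `pv i θ = θ(Mᵢ)` of the
relevant bricks `Mᵢ`: a smooth path `γ` with `d/dt (γ t)(Mᵢ) > 0` for all bricks and all
times, with all coordinates negative for `t ≪ 0`, on the positive side of every hyperplane
`H(Mᵢ)` for `t ≫ 0`, and crossing distinct hyperplanes at distinct times. -/
def IsGGPath {ι : Type} {n : ℕ} (pv : ι → (Fin n → ℝ) → ℝ) (γ : ℝ → Fin n → ℝ) : Prop :=
  ContDiff ℝ (⊤ : ℕ∞) γ ∧
  (∀ (i : ι) (s : ℝ), 0 < deriv (fun u => pv i (γ u)) s) ∧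
  (∃ T : ℝ, ∀ s < T, ∀ k, γ s k < 0) ∧
  (∃ T : ℝ, ∀ s > T, ∀ i : ι, 0 < pv i (γ s)) ∧
  (∀ i j : ι, ({θ : Fin n → ℝ | pv i θ = 0} ≠ {θ : Fin n → ℝ | pv j θ = 0}) →
    ∀ s s' : ℝ, pv i (γ s) = 0 → pv j (γ s') = 0 → s ≠ s')

section AuxLemmas

variable {Λ : Type} [Ring Λ] {ι : Type} {Bk : ι → Type}
  [∀ i, AddCommGroup (Bk i)] [∀ i, Module Λ (Bk i)]

lemma pr_sum {n : ℕ} (θ : Fin n → ℝ) {m : ℕ} (d : Fin m → Fin n → ℕ) :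
    pr θ (∑ j, d j) = ∑ j, pr θ (d j) := by
  have h : ∀ k, θ k * (((∑ j, d j) k : ℕ) : ℝ) = ∑ j, θ k * ((d j k : ℕ) : ℝ) := by
    intro k
    rw [Finset.sum_apply]
    push_cast
    rw [Finset.mul_sum]
  simp only [pr, h]
  exact Finset.sum_comm

lemma inAdd_congr {A B : Type} [AddCommGroup A] [Module Λ A] [AddCommGroup B] [Module Λ B]
    (e : A ≃ₗ[Λ] B) (h : InAdd Λ Bk A) : InAdd Λ Bk B := by
  obtain ⟨k, f, ⟨ee⟩⟩ := h
  exact ⟨k, f, ⟨e.symm.trans ee⟩⟩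

lemma quot_iso_inj {X Y : Type} [AddCommGroup X] [Module Λ X] [AddCommGroup Y] [Module Λ Y]
    (f : X →ₗ[Λ] Y) (hf : Function.Injective f) {p q : Submodule Λ X} (hpq : p ≤ q) :
    Nonempty ((↥(q.map f) ⧸ Submodule.comap (q.map f).subtype (p.map f)) ≃ₗ[Λ]
      (↥q ⧸ Submodule.comap q.subtype p)) := by
  refine ⟨(Submodule.Quotient.equiv _ _ (Submodule.equivMapOfInjective f hf q) ?_).symm⟩
  ext x
  simp only [Submodule.mem_map, Submodule.mem_comap]
  constructor
  · rintro ⟨a, ha, rfl⟩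
    exact ⟨(a : X), ha, (Submodule.coe_equivMapOfInjective_apply f hf q a).symm⟩
  · rintro ⟨a, hap, hax⟩
    have haq : a ∈ q := by
      obtain ⟨b, hbq, hbx⟩ := x.2
      have : b = a := hf (by rw [hbx, hax]; rfl)
      rwa [← this]
    refine ⟨⟨a, haq⟩, hap, ?_⟩
    exact Subtype.ext (Eq.trans (Submodule.coe_equivMapOfInjective_apply f hf q ⟨a, haq⟩) hax)

lemma quot_iso_surj {X Y : Type} [AddCommGroup X] [Module Λ X] [AddCommGroup Y] [Module Λ Y]
    (f : X →ₗ[Λ] Y) (hf : Function.Surjective f) {p q : Submodule Λ Y} (_hpq : p ≤ q) :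
    Nonempty ((↥(q.comap f) ⧸ Submodule.comap (q.comap f).subtype (p.comap f)) ≃ₗ[Λ]
      (↥q ⧸ Submodule.comap q.subtype p)) := by
  have hres : ∀ x ∈ q.comap f, f x ∈ q := fun x hx => hx
  set ψ : ↥(q.comap f) →ₗ[Λ] ↥q ⧸ Submodule.comap q.subtype p :=
    (Submodule.comap q.subtype p).mkQ.comp (f.restrict hres) with hψ
  have hψs : Function.Surjective ψ := by
    intro y
    obtain ⟨z, rfl⟩ := Submodule.mkQ_surjective _ y
    obtain ⟨x, hx⟩ := hf z.1
    refine ⟨⟨x, show f x ∈ q by rw [hx]; exact z.2⟩, ?_⟩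
    show Submodule.mkQ _ (f.restrict hres ⟨x, _⟩) = Submodule.mkQ _ z
    congr 1
    exact Subtype.ext (by simpa using hx)
  have hker : LinearMap.ker ψ = Submodule.comap (q.comap f).subtype (p.comap f) := by
    ext x
    simp only [hψ, LinearMap.mem_ker, LinearMap.comp_apply, Submodule.mkQ_apply,
      Submodule.Quotient.mk_eq_zero, Submodule.mem_comap, LinearMap.restrict_apply]
    rfl
  exact ⟨(Submodule.quotEquivOfEq _ _ hker.symm).trans (ψ.quotKerEquivOfSurjective hψs)⟩

lemma filt_of_inAdd {X : Type} [AddCommGroup X] [Module Λ X] (h : InAdd Λ Bk X) :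
    HasFiltBy Λ (InAdd Λ Bk) X := by
  refine ⟨1, ![⊥, ⊤], ?_, ?_, ?_, ?_⟩
  · intro i j hij
    fin_cases i <;> fin_cases j <;> simp_all <;> first | exact le_rfl | exact bot_le | omega
  · simp
  · simp [Fin.last]
  · intro i
    fin_cases i
    have E : (↥(⊤ : Submodule Λ X) ⧸
        Submodule.comap (⊤ : Submodule Λ X).subtype (⊥ : Submodule Λ X)) ≃ₗ[Λ] X := by
      refine (Submodule.quotEquivOfEqBot _ ?_).trans Submodule.topEquiv
      rw [Submodule.comap_bot, Submodule.ker_subtype]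
    have goal := inAdd_congr E.symm h
    exact goal

lemma quot_iso_of_eq {X : Type} [AddCommGroup X] [Module Λ X] {Q Q' : Submodule Λ X}
    (h : Q = Q') (R : Submodule Λ X) :
    Nonempty ((↥Q ⧸ Submodule.comap Q.subtype R) ≃ₗ[Λ] (↥Q' ⧸ Submodule.comap Q'.subtype R)) := by
  subst h; exact ⟨LinearEquiv.refl _ _⟩

lemma filt_congr {A B : Type} [AddCommGroup A] [Module Λ A] [AddCommGroup B] [Module Λ B]
    (e : A ≃ₗ[Λ] B) (h : HasFiltBy Λ (InAdd Λ Bk) A) : HasFiltBy Λ (InAdd Λ Bk) B := by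
  obtain ⟨k, s, hmono, h0, hlast, hsub⟩ := h
  refine ⟨k, fun i => (s i).map e.toLinearMap,
    fun i j hij => Submodule.map_mono (hmono hij),
    by show Submodule.map _ (s 0) = ⊥; rw [h0, Submodule.map_bot],
    by show Submodule.map _ (s (Fin.last k)) = ⊤
       rw [hlast, Submodule.map_top]
       exact LinearMap.range_eq_top.mpr e.surjective, fun i => ?_⟩
  obtain ⟨E⟩ := quot_iso_inj e.toLinearMap e.injective (hmono (Fin.castSucc_le_succ i))
  exact inAdd_congr E.symm (hsub i)

lemma filt_filt {X : Type} [AddCommGroup X] [Module Λ X] (p : Submodule Λ X)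
    (h1 : HasFiltBy Λ (InAdd Λ Bk) ↥p) (h2 : HasFiltBy Λ (InAdd Λ Bk) (X ⧸ p)) :
    HasFiltBy Λ (InAdd Λ Bk) X := by
  obtain ⟨a, s, smono, s0, slast, ssub⟩ := h1
  obtain ⟨b, t, tmono, t0, tlast, tsub⟩ := h2
  set u : Fin (a + b + 1) → Submodule Λ X := fun i =>
    if h : (i : ℕ) ≤ a then (s ⟨i, by omega⟩).map p.subtype
    else (t ⟨(i : ℕ) - a, by omega⟩).comap p.mkQ with hu
  have hu1 : ∀ (i : Fin (a+b+1)) (h : (i : ℕ) ≤ a),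
      u i = (s ⟨(i : ℕ), by omega⟩).map p.subtype := fun i h => dif_pos h
  have hu2 : ∀ (i : Fin (a+b+1)) (_ : a ≤ (i : ℕ)),
      u i = (t ⟨(i : ℕ) - a, by omega⟩).comap p.mkQ := by
    intro i h
    rcases Nat.lt_or_ge a (i : ℕ) with h' | h'
    · exact dif_neg (by omega)
    · have hia : (i : ℕ) = a := le_antisymm h' h
      rw [hu1 i h']
      have e1 : (⟨(i : ℕ), by omega⟩ : Fin (a+1)) = Fin.last a := by
        apply Fin.ext; simp [hia]
      have e2 : (⟨(i : ℕ) - a, by omega⟩ : Fin (b+1)) = 0 := by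
        apply Fin.ext; simp [hia]
      rw [e1, e2, slast, t0, Submodule.map_top, Submodule.range_subtype,
        Submodule.comap_bot, Submodule.ker_mkQ]
  have hule : ∀ (i : Fin (a+b+1)) (h : (i : ℕ) ≤ a), u i ≤ p := by
    intro i h
    rw [hu1 i h]
    exact Submodule.map_subtype_le p _
  have huge : ∀ (i : Fin (a+b+1)) (h : a ≤ (i : ℕ)), p ≤ u i := by
    intro i h
    rw [hu2 i h]
    intro x hx
    rw [Submodule.mem_comap, show p.mkQ x = 0 from (Submodule.Quotient.mk_eq_zero p).mpr hx]
    exact zero_mem _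
  refine ⟨a + b, u, ?_, ?_, ?_, ?_⟩
  · intro i j hij
    have hij' : (i : ℕ) ≤ (j : ℕ) := hij
    rcases le_or_gt (j : ℕ) a with hj | hj
    · rw [hu1 i (le_trans hij' hj), hu1 j hj]
      exact Submodule.map_mono (smono (Fin.mk_le_mk.mpr hij'))
    rcases le_or_gt (i : ℕ) a with hi | hi
    · exact le_trans (hule i hi) (huge j (le_of_lt hj))
    · rw [hu2 i (le_of_lt hi), hu2 j (le_of_lt hj)]
      exact Submodule.comap_mono (tmono (Fin.mk_le_mk.mpr (by omega)))
  · have h0 : ((0 : Fin (a+b+1)) : ℕ) = 0 := rfl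
    rw [hu1 0 (by omega)]
    have e1 : (⟨((0 : Fin (a+b+1)) : ℕ), by omega⟩ : Fin (a+1)) = 0 := by
      apply Fin.ext; simp
    rw [e1, s0, Submodule.map_bot]
  · have hl : ((Fin.last (a+b) : Fin (a+b+1)) : ℕ) = a + b := rfl
    rw [hu2 (Fin.last (a+b)) (by omega)]
    have e1 : (⟨((Fin.last (a+b) : Fin (a+b+1)) : ℕ) - a, by omega⟩ : Fin (b+1)) = Fin.last b := by
      apply Fin.ext; simp
    rw [e1, tlast, Submodule.comap_top]
  · intro i
    have c1 : ((i.castSucc : Fin (a+b+1)) : ℕ) = (i : ℕ) := rfl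
    have c2 : ((i.succ : Fin (a+b+1)) : ℕ) = (i : ℕ) + 1 := rfl
    rcases Nat.lt_or_ge (i : ℕ) a with hi | hi
    · have e1 : u i.castSucc = (s ⟨(i : ℕ), by omega⟩).map p.subtype := hu1 i.castSucc (by omega)
      have e2 : u i.succ = (s ⟨(i : ℕ) + 1, by omega⟩).map p.subtype := hu1 i.succ (by omega)
      rw [e1]
      obtain ⟨E0⟩ := quot_iso_of_eq e2 ((s ⟨(i : ℕ), by omega⟩).map p.subtype)
      obtain ⟨E⟩ := quot_iso_inj p.subtype p.injective_subtype
        (smono (Fin.mk_le_mk.mpr (Nat.le_succ _)) :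
          s ⟨(i : ℕ), by omega⟩ ≤ s ⟨(i : ℕ) + 1, by omega⟩)
      exact inAdd_congr (E0.trans E).symm (ssub ⟨(i : ℕ), hi⟩)
    · have e1 : u i.castSucc = (t ⟨(i : ℕ) - a, by omega⟩).comap p.mkQ := hu2 i.castSucc (by omega)
      have e2 : u i.succ = (t ⟨((i : ℕ) - a) + 1, by omega⟩).comap p.mkQ := by
        have h2 := hu2 i.succ (by omega)
        have hidx : (⟨((i.succ : Fin (a+b+1)) : ℕ) - a, by omega⟩ : Fin (b+1))
            = ⟨((i : ℕ) - a) + 1, by omega⟩ := Fin.ext (by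
              show ((i.succ : Fin (a+b+1)) : ℕ) - a = ((i : ℕ) - a) + 1
              rw [c2]; omega)
        exact h2.trans (congrArg (fun z : Fin (b+1) => (t z).comap p.mkQ) hidx)
      rw [e1]
      obtain ⟨E0⟩ := quot_iso_of_eq e2 ((t ⟨(i : ℕ) - a, by omega⟩).comap p.mkQ)
      obtain ⟨E⟩ := quot_iso_surj p.mkQ (Submodule.mkQ_surjective p)
        (tmono (Fin.mk_le_mk.mpr (Nat.le_succ _)) :
          t ⟨(i : ℕ) - a, by omega⟩ ≤ t ⟨((i : ℕ) - a) + 1, by omega⟩)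
      exact inAdd_congr (E0.trans E).symm (tsub ⟨(i : ℕ) - a, by omega⟩)

end AuxLemmas

section DimLemmas

variable {Λ : Type} [Ring Λ] {n : ℕ}
  (dimv : (M : Type) → [AddCommGroup M] → [Module Λ M] → Fin n → ℕ)
  (hdim_zero : ∀ (M : Type) [AddCommGroup M] [Module Λ M] [Module.Finite Λ M],
      dimv M = 0 ↔ Subsingleton M)
  (hdim_add : ∀ (A B C : Type) [AddCommGroup A] [Module Λ A] [AddCommGroup B] [Module Λ B]
      [AddCommGroup C] [Module Λ C] [Module.Finite Λ B] (f : A →ₗ[Λ] B) (g : B →ₗ[Λ] C),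
      Function.Injective f → Function.Surjective g → LinearMap.range f = LinearMap.ker g →
      dimv B = dimv A + dimv C)

include hdim_zero hdim_add

lemma dim_congr {A B : Type} [AddCommGroup A] [Module Λ A] [AddCommGroup B] [Module Λ B]
    [Module.Finite Λ B] (e : A ≃ₗ[Λ] B) : dimv A = dimv B := by
  have h := hdim_add A B PUnit e.toLinearMap 0 e.injective
    (fun x => ⟨0, Subsingleton.elim _ _⟩)
    (by rw [LinearMap.ker_zero]; exact LinearEquiv.range e)
  have hz : dimv PUnit = 0 := (hdim_zero PUnit).mpr inferInstance
  rw [h, hz, add_zero]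

lemma dim_pi {ι : Type} (Bk : ι → Type) [∀ i, AddCommGroup (Bk i)] [∀ i, Module Λ (Bk i)]
    [∀ i, Module.Finite Λ (Bk i)] :
    ∀ (k : ℕ) (f : Fin k → ι), dimv (∀ j : Fin k, Bk (f j)) = ∑ j, dimv (Bk (f j)) := by
  intro k
  induction k with
  | zero =>
    intro f
    have : Subsingleton (∀ j : Fin 0, Bk (f j)) := inferInstance
    rw [(hdim_zero _).mpr this]
    simp
  | succ m ih =>
    intro f
    classical
    set f0 : Bk (f 0) →ₗ[Λ] (∀ j : Fin (m+1), Bk (f j)) :=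
      LinearMap.single Λ (fun j => Bk (f j)) 0 with hf0
    set g0 : (∀ j : Fin (m+1), Bk (f j)) →ₗ[Λ] (∀ l : Fin m, Bk (f l.succ)) :=
      LinearMap.pi (fun l => LinearMap.proj l.succ) with hg0
    have hinj : Function.Injective f0 := by
      intro x y h
      have := congrFun h 0
      simpa [hf0] using this
    have hsur : Function.Surjective g0 := by
      intro y
      refine ⟨Fin.cases 0 y, ?_⟩
      funext l
      simp [hg0]
    have hrk : LinearMap.range f0 = LinearMap.ker g0 := by
      ext x
      simp only [LinearMap.mem_range, LinearMap.mem_ker]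
      constructor
      · rintro ⟨w, rfl⟩
        funext l
        simp [hg0, hf0, Pi.single_eq_of_ne (Fin.succ_ne_zero l)]
      · intro hx
        refine ⟨x 0, ?_⟩
        have hxl : ∀ l : Fin m, x l.succ = 0 := fun l => congrFun hx l
        funext j
        induction j using Fin.cases with
        | zero => simp [hf0]
        | succ l => simp [hf0, Pi.single_eq_of_ne (Fin.succ_ne_zero l), hxl l]
    have h := hdim_add (Bk (f 0)) (∀ j : Fin (m+1), Bk (f j)) (∀ l : Fin m, Bk (f l.succ))
      f0 g0 hinj hsur hrk
    rw [h, ih (fun l => f l.succ), Fin.sum_univ_succ]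

end DimLemmas

/-- The union over all bricks `M` of `ℒ` of the walls `D(M)` equals the union
of the interiors `int D(M)`: every point on some wall lies in the interior of some wall. -/
theorem stmt0
    (K : Type) [Field K] (Λ : Type) [Ring Λ] [Algebra K Λ] [FiniteDimensional K Λ]
    {ι : Type} [Fintype ι] (Bk : ι → Type)
    [∀ i, AddCommGroup (Bk i)] [∀ i, Module Λ (Bk i)] [∀ i, Module.Finite Λ (Bk i)]
    {n : ℕ}
    (dimv : (M : Type) → [AddCommGroup M] → [Module Λ M] → Fin n → ℕ)
    (hbrick : ∀ i, IsBrick Λ (Bk i))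
    (hindep : ∀ i j : ι, i ≠ j →
      LinearIndependent ℝ ![fun k => ((dimv (Bk i) k : ℝ)), fun k => ((dimv (Bk j) k : ℝ))])
    (hdim_zero : ∀ (M : Type) [AddCommGroup M] [Module Λ M] [Module.Finite Λ M],
      dimv M = 0 ↔ Subsingleton M)
    (hdim_add : ∀ (A B C : Type) [AddCommGroup A] [Module Λ A] [AddCommGroup B] [Module Λ B]
      [AddCommGroup C] [Module Λ C] [Module.Finite Λ B] (f : A →ₗ[Λ] B) (g : B →ₗ[Λ] C),
      Function.Injective f → Function.Surjective g → LinearMap.range f = LinearMap.ker g →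
      dimv B = dimv A + dimv C) :
    (⋃ i, Wall Λ Bk dimv (Bk i)) = ⋃ i, IntWall Λ Bk dimv (Bk i) := by
  classical
  haveI hNoethΛ : IsNoetherianRing Λ :=
    isNoetherian_of_tower K (IsNoetherian.iff_fg.mpr ‹FiniteDimensional K Λ›)
  ext θ
  simp only [Set.mem_iUnion]
  constructor
  case mpr =>
    rintro ⟨i, h0, hpos⟩
    exact ⟨i, h0, fun N _ _ hN => (hpos N hN).le⟩
  rintro ⟨i, hi⟩
  set S : Finset ι := Finset.univ.filter (fun i => θ ∈ Wall Λ Bk dimv (Bk i)) with hS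
  obtain ⟨i₀, hi₀S, hi₀min⟩ := S.exists_min_image (fun i => ∑ k, dimv (Bk i) k)
    ⟨i, Finset.mem_filter.mpr ⟨Finset.mem_univ _, hi⟩⟩
  have hwall : θ ∈ Wall Λ Bk dimv (Bk i₀) := (Finset.mem_filter.mp hi₀S).2
  refine ⟨i₀, hwall.1, ?_⟩
  intro N instN1 instN2 hN
  by_contra hle
  have hz : pr θ (dimv N) = 0 := le_antisymm (not_lt.mp hle) (hwall.2 N hN)
  obtain ⟨hNnt, ⟨k, f, ⟨e⟩⟩, g, hgs, hgni, hker⟩ := hN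
  obtain ⟨m, rfl⟩ : ∃ m, k = m + 1 := by
    cases k with
    | zero =>
      haveI : Subsingleton ((j : Fin 0) → Bk (f j)) := inferInstance
      haveI := e.toEquiv.subsingleton
      exact absurd hNnt (not_nontrivial N)
    | succ m => exact ⟨m, rfl⟩
  haveI hNfin : Module.Finite Λ N := Module.Finite.equiv e.symm
  have hdN : dimv N = ∑ j, dimv (Bk (f j)) := by
    rw [dim_congr dimv hdim_zero hdim_add e]
    exact dim_pi dimv hdim_zero hdim_add Bk (m+1) f
  -- the maps onto the summands
  set gj : ∀ j : Fin (m+1), Bk i₀ →ₗ[Λ] Bk (f j) :=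
    fun j => (LinearMap.proj j).comp (e.toLinearMap.comp g) with hgjdef
  have hgjs : ∀ j, Function.Surjective (gj j) := by
    intro j y
    obtain ⟨x, hx⟩ := hgs (e.symm (Pi.single j y))
    exact ⟨x, by simp [hgjdef, hx]⟩
  have hgjni : ∀ j, ¬ Function.Injective (gj j) := by
    intro j hinj
    exact hgni (Function.Injective.of_comp (f := fun y => e y j) hinj)
  have hker_le : ∀ j, LinearMap.ker g ≤ LinearMap.ker (gj j) := by
    intro j x hx
    have : g x = 0 := hx
    simp [hgjdef, LinearMap.mem_ker, this]
  have hfilt : ∀ j, HasFiltBy Λ (InAdd Λ Bk) ↥(LinearMap.ker (gj j)) := by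
    intro j
    refine filt_filt (Submodule.comap (LinearMap.ker (gj j)).subtype (LinearMap.ker g)) ?_ ?_
    · exact filt_congr (Submodule.comapSubtypeEquivOfLe (hker_le j)).symm hker
    · refine filt_of_inAdd ?_
      set φ : ↥(LinearMap.ker (gj j)) →ₗ[Λ] (∀ l : Fin m, Bk (f (j.succAbove l))) :=
        LinearMap.pi (fun l => (LinearMap.proj (j.succAbove l)).comp
          (e.toLinearMap.comp (g.comp (LinearMap.ker (gj j)).subtype))) with hφdef
      have hφs : Function.Surjective φ := by
        intro y
        obtain ⟨x, hx⟩ := hgs (e.symm (j.insertNth 0 y))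
        have hxk : x ∈ LinearMap.ker (gj j) := by
          simp [hgjdef, LinearMap.mem_ker, hx]
        refine ⟨⟨x, hxk⟩, ?_⟩
        funext l
        simp [hφdef, hx]
      have hφker : LinearMap.ker φ =
          Submodule.comap (LinearMap.ker (gj j)).subtype (LinearMap.ker g) := by
        ext x
        simp only [LinearMap.mem_ker, Submodule.mem_comap, Submodule.coe_subtype]
        constructor
        · intro hx
          have hall : e (g x.1) = 0 := by
            funext j'
            rcases eq_or_ne j' j with rfl | hne
            · have hx2 := x.2
              simp only [hgjdef, LinearMap.mem_ker, LinearMap.comp_apply,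
                LinearMap.proj_apply] at hx2
              exact hx2
            · obtain ⟨l, rfl⟩ := Fin.exists_succAbove_eq hne
              have := congrFun hx l
              simpa [hφdef] using this
          have : g x.1 = 0 := by
            have := congrArg e.symm hall
            simpa using this
          exact this
        · intro hx
          funext l
          simp [hφdef, show g x.1 = 0 from hx]
      exact ⟨m, fun l => f (j.succAbove l),
        ⟨(Submodule.quotEquivOfEq _ _ hφker.symm).trans (φ.quotKerEquivOfSurjective hφs)⟩⟩
  have hWA : ∀ j, IsWAQuot Λ Bk (Bk i₀) (Bk (f j)) := by
    intro j
    exact ⟨(hbrick (f j)).1,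
      ⟨1, fun _ => f j, ⟨(LinearEquiv.funUnique (Fin 1) Λ (Bk (f j))).symm⟩⟩,
      gj j, hgjs j, hgjni j, hfilt j⟩
  have hge : ∀ j, 0 ≤ pr θ (dimv (Bk (f j))) := fun j => hwall.2 _ (hWA j)
  have hsum : ∑ j : Fin (m+1), pr θ (dimv (Bk (f j))) = 0 := by
    rw [← pr_sum, ← hdN]
    exact hz
  have hzero : ∀ j, pr θ (dimv (Bk (f j))) = 0 := fun j =>
    (Finset.sum_eq_zero_iff_of_nonneg (fun j _ => hge j)).mp hsum j (Finset.mem_univ j)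
  -- θ lies on the wall of Bk (f 0)
  have hwall0 : θ ∈ Wall Λ Bk dimv (Bk (f 0)) := by
    refine ⟨hzero 0, ?_⟩
    intro N' instN'1 instN'2 hN'
    obtain ⟨hnt', hadd', g', hs', hni', hf'⟩ := hN'
    refine hwall.2 N' ⟨hnt', hadd', g'.comp (gj 0), hs'.comp (hgjs 0), ?_, ?_⟩
    · intro hinj
      exact hgjni 0 (Function.Injective.of_comp (f := ⇑g') hinj)
    · rw [LinearMap.ker_comp]
      have hle' : LinearMap.ker (gj 0) ≤ Submodule.comap (gj 0) (LinearMap.ker g') := by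
        intro x hx
        have : gj 0 x = 0 := hx
        simp [Submodule.mem_comap, LinearMap.mem_ker, this]
      refine filt_filt (Submodule.comap
        (Submodule.comap (gj 0) (LinearMap.ker g')).subtype (LinearMap.ker (gj 0))) ?_ ?_
      · exact filt_congr (Submodule.comapSubtypeEquivOfLe hle').symm (hfilt 0)
      · obtain ⟨E⟩ := quot_iso_surj (gj 0) (hgjs 0)
          (bot_le : (⊥ : Submodule Λ (Bk (f 0))) ≤ LinearMap.ker g')
        rw [Submodule.comap_bot] at E
        have E2 : (↥(LinearMap.ker g') ⧸
            Submodule.comap (LinearMap.ker g').subtype (⊥ : Submodule Λ (Bk (f 0)))) ≃ₗ[Λ]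
            ↥(LinearMap.ker g') := by
          refine Submodule.quotEquivOfEqBot _ ?_
          rw [Submodule.comap_bot, Submodule.ker_subtype]
        exact filt_congr ((E.trans E2)).symm hf'
  -- minimality contradiction
  have hf0S : f 0 ∈ S := Finset.mem_filter.mpr ⟨Finset.mem_univ _, hwall0⟩
  have hmin : (∑ kk, dimv (Bk i₀) kk) ≤ ∑ kk, dimv (Bk (f 0)) kk := hi₀min (f 0) hf0S
  have hdim : dimv (Bk i₀) = dimv ↥(LinearMap.ker g) + dimv N :=
    hdim_add _ _ _ (LinearMap.ker g).subtype g (Submodule.injective_subtype _) hgs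
      (Submodule.range_subtype _)
  haveI : IsNoetherian Λ (Bk i₀) := inferInstance
  haveI hkfin : Module.Finite Λ ↥(LinearMap.ker g) := inferInstance
  haveI hknt : Nontrivial ↥(LinearMap.ker g) :=
    Submodule.nontrivial_iff_ne_bot.mpr (fun h => hgni (LinearMap.ker_eq_bot.mp h))
  have hkne : dimv ↥(LinearMap.ker g) ≠ 0 := fun h =>
    not_subsingleton _ ((hdim_zero _).mp h)
  have h1 : 1 ≤ ∑ kk, dimv ↥(LinearMap.ker g) kk := by
    by_contra h
    push_neg at h
    apply hkne
    funext kk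
    have := Finset.sum_eq_zero_iff.mp (Nat.lt_one_iff.mp h) kk (Finset.mem_univ kk)
    simpa using this
  have h2 : (∑ kk, dimv (Bk (f 0)) kk) ≤ ∑ kk, dimv N kk := by
    have : ∀ kk, dimv (Bk (f 0)) kk ≤ dimv N kk := by
      intro kk
      rw [hdN, Finset.sum_apply]
      exact Finset.single_le_sum (f := fun j : Fin (m+1) => dimv (Bk (f j)) kk)
        (fun j _ => Nat.zero_le _) (Finset.mem_univ 0)
    exact Finset.sum_le_sum (fun kk _ => this kk)
  have h3 : (∑ kk, dimv (Bk i₀) kk)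
      = (∑ kk, dimv ↥(LinearMap.ker g) kk) + ∑ kk, dimv N kk := by
    simp only [hdim, Pi.add_apply]
    rw [Finset.sum_add_distrib]
  omega
end
end

section
/- Let chambers U and U' be separated by the wall int D(M), let θ₀ be a generic point of int D(M) on their common boundary, and set θ₋ = θ₀ − εη and θ₊ = θ₀ + εη for small ε > 0, where η = (1,…,1). Then M ∈ S(θ₊), but M ∉ S(θ₀) and M ∉ S(θ₋). -/
set_option autoImplicit false
set_option maxHeartbeats 1000000

open scoped BigOperators

noncomputable section

lemma pr_add_smul {n : ℕ} (θ : Fin n → ℝ) (ε : ℝ) (d : Fin n → ℕ) :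
    pr (θ + ε • (fun _ => 1 : Fin n → ℝ)) d = pr θ d + ε * ∑ k, (d k : ℝ) := by
  simp only [pr, Pi.add_apply, Pi.smul_apply, smul_eq_mul, mul_one, add_mul,
    Finset.sum_add_distrib, Finset.mul_sum]

lemma pr_sub_smul {n : ℕ} (θ : Fin n → ℝ) (ε : ℝ) (d : Fin n → ℕ) :
    pr (θ - ε • (fun _ => 1 : Fin n → ℝ)) d = pr θ d - ε * ∑ k, (d k : ℝ) := by
  simp only [pr, Pi.sub_apply, Pi.smul_apply, smul_eq_mul, mul_one, sub_mul,
    Finset.sum_sub_distrib, Finset.mul_sum]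

/-- If chambers `U, U'` are separated by the wall `int D(M)`, `θ₀` is a generic
point of `int D(M)` on their common boundary and `θ∓ = θ₀ ∓ ε η` (small `ε > 0`,
`η = (1,…,1)`), then `M ∈ S(θ₊)` but `M ∉ S(θ₀)` and `M ∉ S(θ₋)`. -/
theorem stmt4
    (K : Type) [Field K] (Λ : Type) [Ring Λ] [Algebra K Λ] [FiniteDimensional K Λ]
    {ι : Type} [Fintype ι] (Bk : ι → Type)
    [∀ i, AddCommGroup (Bk i)] [∀ i, Module Λ (Bk i)] [∀ i, Module.Finite Λ (Bk i)]
    {n : ℕ}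
    (dimv : (M : Type) → [AddCommGroup M] → [Module Λ M] → Fin n → ℕ)
    (hbrick : ∀ i, IsBrick Λ (Bk i))
    (hindep : ∀ i j : ι, i ≠ j →
      LinearIndependent ℝ ![fun k => ((dimv (Bk i) k : ℝ)), fun k => ((dimv (Bk j) k : ℝ))])
    (hdim_zero : ∀ (M : Type) [AddCommGroup M] [Module Λ M] [Module.Finite Λ M],
      dimv M = 0 ↔ Subsingleton M)
    (hdim_add : ∀ (A B C : Type) [AddCommGroup A] [Module Λ A] [AddCommGroup B] [Module Λ B]
      [AddCommGroup C] [Module Λ C] [Module.Finite Λ B] (f : A →ₗ[Λ] B) (g : B →ₗ[Λ] C),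
      Function.Injective f → Function.Surjective g → LinearMap.range f = LinearMap.ker g →
      dimv B = dimv A + dimv C)
    (i₀ : ι) (θ₀ : Fin n → ℝ)
    (hθ₀ : θ₀ ∈ IntWall Λ Bk dimv (Bk i₀))
    (hgen : ∀ j, j ≠ i₀ → θ₀ ∉ Wall Λ Bk dimv (Bk j))
    (U U' : Set (Fin n → ℝ))
    (hU : IsChamber Λ Bk dimv U) (hU' : IsChamber Λ Bk dimv U')
    (η : Fin n → ℝ) (hη : η = fun _ => 1)
    (ε : ℝ) (hε : 0 < ε)
    (hsmall : ∀ ε' : ℝ, 0 < ε' → ε' ≤ ε → (θ₀ - ε' • η) ∈ U ∧ (θ₀ + ε' • η) ∈ U') :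
    memS Λ Bk dimv (θ₀ + ε • η) (Bk i₀) ∧
    ¬ memS Λ Bk dimv θ₀ (Bk i₀) ∧
    ¬ memS Λ Bk dimv (θ₀ - ε • η) (Bk i₀) := by
  subst hη
  obtain ⟨hz, hpos⟩ := hθ₀
  have hnt : Nontrivial (Bk i₀) := (hbrick i₀).1
  have hdne : dimv (Bk i₀) ≠ 0 := by
    intro h
    exact (not_subsingleton (Bk i₀)) ((hdim_zero (Bk i₀)).1 h)
  have hsum : 0 < ∑ k, ((dimv (Bk i₀) k : ℝ)) := by
    have : ∃ k, dimv (Bk i₀) k ≠ 0 := by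
      by_contra h
      push_neg at h
      exact hdne (funext h)
    obtain ⟨k, hk⟩ := this
    apply Finset.sum_pos' (fun k _ => by positivity)
    exact ⟨k, Finset.mem_univ k, by positivity⟩
  have hsumN : ∀ (N : Type) [AddCommGroup N] [Module Λ N],
      0 ≤ ∑ k, ((dimv N k : ℝ)) := fun N _ _ =>
    Finset.sum_nonneg (fun k _ => by positivity)
  refine ⟨?_, ?_, ?_⟩
  · refine Or.inr ⟨⟨1, fun _ => i₀, ⟨(LinearEquiv.funUnique (Fin 1) Λ (Bk i₀)).symm⟩⟩, ?_, ?_⟩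
    · rw [pr_add_smul, hz, zero_add]
      positivity
    · intro N _ _ hN
      rw [pr_add_smul]
      have h1 := hpos N hN
      have h2 := hsumN N
      nlinarith
  · rintro (h | ⟨-, h, -⟩)
    · exact not_subsingleton (Bk i₀) h
    · rw [hz] at h; exact lt_irrefl 0 h
  · rintro (h | ⟨-, h, -⟩)
    · exact not_subsingleton (Bk i₀) h
    · rw [pr_sub_smul, hz, zero_sub] at h
      nlinarith
end
end
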